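/- (Rodrigues formula) For every θ ∈ ℝ and every unit vector u ∈ ℝ³, the matrix exponential of θ[u]× satisfies exp(θ[u]×) = I + sin(θ)[u]× + (1 − cos(θ))[u]×², and this matrix belongs to SO(3). -/

import Mathlib

open Matrix

/-- `R ∈ SO(3)`: `R Rᵀ = I` and `det R = 1`. -/
def IsSO3 (R : Matrix (Fin 3) (Fin 3) ℝ) : Prop := R * Rᵀ = 1 ∧ R.det = 1

/-- The skew-symmetric matrix `[x]×` with `[x]× y = x × y`. -/
def skew (x : Fin 3 → ℝ) : Matrix (Fin 3) (Fin 3) ℝ :=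
  !![0, -x 2, x 1; x 2, 0, -x 0; -x 1, x 0, 0]

/-!
For `K = [u]×` with `|u| = 1` we have `K³ = -K`, so `R t = I + sin t • K + (1 - cos t) • K²`
satisfies `R' = K R` and `R 0 = I`; since `exp (-t • K) * R t` then has zero derivative,
`R t = exp (t • K)`. For a skew-symmetric `A`, `(exp A)ᵀ = exp (-A) = (exp A)⁻¹`, and
`det (exp A) = det (exp (A / 2))² ≥ 0` together with `det (exp A)² = 1` forces `det (exp A) = 1`.
-/

open NormedSpace

section BanachAlgebra

variable {𝔸 : Type*} [NormedRing 𝔸] [NormedAlgebra ℝ 𝔸]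

theorem eq_exp_smul_of_hasDerivAt_mul [CompleteSpace 𝔸] {K : 𝔸} {f : ℝ → 𝔸}
    (hf : ∀ t, HasDerivAt f (K * f t) t) (hf₀ : f 0 = 1) (t : ℝ) : f t = exp (t • K) := by
  have hg' (s : ℝ) : HasDerivAt (fun s => exp (s • -K) * f s) 0 s :=
    ((hasDerivAt_exp_smul_const (-K) s).mul (hf s)).congr_deriv (by noncomm_ring)
  have hg : exp (t • -K) * f t = 1 := by
    simpa [hf₀] using is_const_of_deriv_eq_zero (fun s => (hg' s).differentiableAt)
      (fun s => (hg' s).deriv) t 0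
  have hinv : exp (t • K) * exp (t • -K) = 1 := by
    let +nondep : NormedAlgebra ℚ 𝔸 := .restrictScalars ℚ ℝ 𝔸
    rw [smul_neg, ← NormedSpace.exp_add_of_commute (Commute.refl _).neg_right, add_neg_cancel,
      exp_zero]
  calc f t = exp (t • K) * exp (t • -K) * f t := by rw [hinv, one_mul]
    _ = exp (t • K) := by rw [mul_assoc, hg, mul_one]

theorem hasDerivAt_rodrigues {K : 𝔸} (hK : K * (K * K) = -K) (t : ℝ) :
    HasDerivAt (fun t => 1 + Real.sin t • K + (1 - Real.cos t) • (K * K))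
      (K * (1 + Real.sin t • K + (1 - Real.cos t) • (K * K))) t := by
  have hR : HasDerivAt (fun t => 1 + Real.sin t • K + (1 - Real.cos t) • (K * K))
      (Real.cos t • K + Real.sin t • (K * K)) t := by
    refine (((Real.hasDerivAt_sin t).smul_const K).const_add 1 |>.add
      (((Real.hasDerivAt_cos t).const_sub 1).smul_const (K * K))).congr_deriv ?_
    simp
  refine hR.congr_deriv ?_
  rw [mul_add, mul_add, mul_one, mul_smul_comm, mul_smul_comm, hK]
  module

theorem exp_smul_eq_rodrigues [CompleteSpace 𝔸] {K : 𝔸} (hK : K * (K * K) = -K) (θ : ℝ) :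
    exp (θ • K) = 1 + Real.sin θ • K + (1 - Real.cos θ) • (K * K) :=
  (eq_exp_smul_of_hasDerivAt_mul (hasDerivAt_rodrigues hK) (by simp) θ).symm

end BanachAlgebra

section SkewSymmetric

variable {n : Type*} [Fintype n] [DecidableEq n]

theorem exp_mul_transpose_exp_of_transpose_eq_neg {A : Matrix n n ℝ} (hA : Aᵀ = -A) :
    exp A * (exp A)ᵀ = 1 := by
  rw [← Matrix.exp_transpose, hA, ← Matrix.exp_add_of_commute _ _ (Commute.refl A).neg_right,
    add_neg_cancel, exp_zero]

theorem det_exp_of_transpose_eq_neg {A : Matrix n n ℝ} (hA : Aᵀ = -A) : (exp A).det = 1 := by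
  have hsq : (exp A).det * (exp A).det = 1 := by
    simpa using congrArg det (exp_mul_transpose_exp_of_transpose_eq_neg hA)
  have hnonneg : 0 ≤ (exp A).det := by
    have hA₂ : A = (2⁻¹ : ℝ) • A + (2⁻¹ : ℝ) • A := by rw [← add_smul]; norm_num
    rw [hA₂, Matrix.exp_add_of_commute _ _ (Commute.refl _), det_mul]
    exact mul_self_nonneg _
  nlinarith

end SkewSymmetric

theorem skew_transpose (u : Fin 3 → ℝ) : (skew u)ᵀ = -skew u := by
  ext i j
  fin_cases i <;> fin_cases j <;> simp [skew]

theorem skew_mul_skew_mul_skew (u : Fin 3 → ℝ) :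
    skew u * (skew u * skew u) = -(u ⬝ᵥ u) • skew u := by
  ext i j
  fin_cases i <;> fin_cases j <;>
    simp [skew, mul_apply, dotProduct, Fin.sum_univ_three] <;> ring

theorem stmt1 (θ : ℝ) (u : Fin 3 → ℝ) (hu : u ⬝ᵥ u = 1) :
    NormedSpace.exp (θ • skew u) =
      1 + Real.sin θ • skew u + (1 - Real.cos θ) • (skew u * skew u) ∧
    IsSO3 (NormedSpace.exp (θ • skew u)) := by
  have hK : skew u * (skew u * skew u) = -skew u := by
    rw [skew_mul_skew_mul_skew, hu, neg_smul, one_smul]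
  have hA : (θ • skew u)ᵀ = -(θ • skew u) := by rw [transpose_smul, skew_transpose, smul_neg]
  exact ⟨open scoped Matrix.Norms.Operator in exp_smul_eq_rodrigues hK θ,
    exp_mul_transpose_exp_of_transpose_eq_neg hA, det_exp_of_transpose_eq_neg hA⟩
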